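/- arXiv:2003.12414 — 6 statements merged into one kernel-verified Lean document; each statement's English description precedes it below -/
import Mathlib

section
/- Let σ_{(z,z+1)} be the swap of positions z and z+1 on configurations η: ℤ → ℤ ∪ {+∞}, and let W_{(z,z+1)} be the totally asymmetric swap operator that applies σ_{(z,z+1)} if η(z) < η(z+1) and does nothing otherwise. Then for the identity bijection id: ℤ → ℤ viewed as a configuration, and for any k ∈ ℕ and integers z_1, …, z_k, one has W_{(z_k,z_k+1)} ⋯ W_{(z_1,z_1+1)} id = inv(W_{(z_1,z_1+1)} ⋯ W_{(z_k,z_k+1)} id), where inv denotes the inverse in the group of bijections ℤ → ℤ. -/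
/-- The totally asymmetric swap operator on bijections `ℤ → ℤ`:
swap the values at positions `z` and `z+1` if `η z < η (z+1)`, else do nothing. -/
noncomputable def tasepW (z : ℤ) (η : Equiv.Perm ℤ) : Equiv.Perm ℤ :=
  if η z < η (z + 1) then (Equiv.swap z (z + 1)).trans η else η

/-!
`W_z` acts on positions: it multiplies a permutation on the right by the transposition
`(z z+1)`. Conjugating by inversion gives the operator `V_w` that acts on values, multiplying on
the left by `(w w+1)` when `w` stands to the left of `w+1`. Since `(w w+1)` preserves the relative
order of every pair of values except `{w, w+1}` itself, `W_z` and `V_w` commute: away from the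
configurations with `{η z, η (z+1)} = {w, w+1}` neither operator changes the other's condition, and
when `η z = w, η (z+1) = w+1` both produce `η (z z+1) = (w w+1) η`, which neither can move further.
Hence `(W_{z_k} ⋯ W_{z_1} id)⁻¹ = V_{z_k} ⋯ V_{z_1} id`, and pushing each `V_{z_i} id = W_{z_i} id`
through the later `V`'s turns this into `W_{z_1} ⋯ W_{z_k} id`.
-/

open Equiv

noncomputable def tasepV (w : ℤ) (η : Perm ℤ) : Perm ℤ :=
  (tasepW w η⁻¹)⁻¹

lemma tasepW_eq (z : ℤ) (η : Perm ℤ) :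
    tasepW z η = if η z < η (z + 1) then η * swap z (z + 1) else η :=
  rfl

lemma tasepV_eq (w : ℤ) (η : Perm ℤ) :
    tasepV w η = if η⁻¹ w < η⁻¹ (w + 1) then swap w (w + 1) * η else η := by
  rw [tasepV, tasepW_eq]
  split_ifs <;> simp [mul_inv_rev, swap_inv]

lemma tasepW_one (z : ℤ) : tasepW z 1 = swap z (z + 1) := by
  simp [tasepW_eq]

lemma tasepV_one (w : ℤ) : tasepV w 1 = swap w (w + 1) := by
  rw [tasepV, inv_one, tasepW_one, swap_inv]

lemma swap_succ_lt_swap_succ_iff {a b w : ℤ} (h : ¬(a = w ∧ b = w + 1))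
    (h' : ¬(a = w + 1 ∧ b = w)) : swap w (w + 1) a < swap w (w + 1) b ↔ a < b := by
  rw [swap_apply_def, swap_apply_def]
  split_ifs <;> omega

lemma tasepW_tasepV_comm (z w : ℤ) (η : Perm ℤ) :
    tasepW z (tasepV w η) = tasepV w (tasepW z η) := by
  have hinv {x y : ℤ} : η⁻¹ x = y ↔ η y = x := by rw [Perm.inv_eq_iff_eq, eq_comm]
  by_cases hsorted : η z = w ∧ η (z + 1) = w + 1
  · have hmul : η * swap z (z + 1) = swap w (w + 1) * η := by
      rw [mul_swap_eq_swap_mul, hsorted.1, hsorted.2]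
    have hz : η⁻¹ w = z := hinv.2 hsorted.1
    have hz1 : η⁻¹ (w + 1) = z + 1 := hinv.2 hsorted.2
    have hVη : tasepV w η = η * swap z (z + 1) := by
      rw [tasepV_eq, if_pos (by rw [hz, hz1]; exact lt_add_one z), hmul]
    have hWη : tasepW z η = η * swap z (z + 1) := by
      rw [tasepW_eq, if_pos (by rw [hsorted.1, hsorted.2]; exact lt_add_one w)]
    rw [hVη, hWη, tasepW_eq, tasepV_eq, if_neg, if_neg]
    · rw [mul_inv_rev, swap_inv, Perm.mul_apply, Perm.mul_apply, hz, hz1, swap_apply_left,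
        swap_apply_right]
      omega
    · simp [hsorted]
  by_cases hreversed : η z = w + 1 ∧ η (z + 1) = w
  · have hz : η⁻¹ w = z + 1 := hinv.2 hreversed.2
    have hz1 : η⁻¹ (w + 1) = z := hinv.2 hreversed.1
    simp [tasepW_eq, tasepV_eq, hz, hz1, hreversed]
  have hW : swap w (w + 1) (η z) < swap w (w + 1) (η (z + 1)) ↔ η z < η (z + 1) :=
    swap_succ_lt_swap_succ_iff hsorted hreversed
  have hV : swap z (z + 1) (η⁻¹ w) < swap z (z + 1) (η⁻¹ (w + 1)) ↔ η⁻¹ w < η⁻¹ (w + 1) :=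
    swap_succ_lt_swap_succ_iff (by rwa [hinv, hinv]) (by rwa [hinv, hinv, and_comm])
  by_cases hWη : η z < η (z + 1) <;> by_cases hVη : η⁻¹ w < η⁻¹ (w + 1) <;>
    simp only [tasepW_eq, tasepV_eq, hWη, hVη, if_true, if_false, Perm.mul_apply, mul_inv_rev,
      swap_inv, hW, hV, mul_assoc]

lemma inv_foldl_tasepW (zs : List ℤ) (η : Perm ℤ) :
    (zs.foldl (fun η z => tasepW z η) η)⁻¹ = zs.foldl (fun η w => tasepV w η) η⁻¹ :=
  (List.foldl_hom _ fun η w => by rw [tasepV, inv_inv]).symm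

lemma foldl_tasepV_one (zs : List ℤ) :
    zs.foldl (fun η w => tasepV w η) 1 = zs.foldr (fun z η => tasepW z η) 1 := by
  induction zs with
  | nil => rfl
  | cons z zs ih =>
    rw [List.foldl_cons, List.foldr_cons, ← ih, tasepV_one, ← tasepW_one]
    exact List.foldl_hom (tasepW z) fun η w => (tasepW_tasepV_comm z w η).symm

/-- Color-position symmetry (Lemma 2.1 of Angel–Holroyd–Romik):
`W_{(z_k,z_k+1)} ⋯ W_{(z_1,z_1+1)} id = inv (W_{(z_1,z_1+1)} ⋯ W_{(z_k,z_k+1)} id)`. -/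
theorem tasep_color_position_symmetry (zs : List ℤ) :
    zs.foldl (fun η z => tasepW z η) 1
      = (zs.reverse.foldl (fun η z => tasepW z η) 1)⁻¹ := by
  rw [← inv_inv (zs.foldl _ 1), inv_foldl_tasepW, inv_one, foldl_tasepV_one,
    List.foldl_reverse]
end

section
/- Let η: ℤ → ℤ be a bijection and let s_1, …, s_m be adjacent transpositions forming a reduced word for the order-reversing permutation of the interval {−M₋, …, M₊}. Then the configuration W_{s_m} ⋯ W_{s_1} η agrees with η outside {−M₋, …, M₊}, and on {−M₋, …, M₊} its values are the values {η(i) : −M₋ ≤ i ≤ M₊} sorted in decreasing order. In particular (W_{s_m} ⋯ W_{s_1} η)(−M₋) = max_{−M₋ ≤ i ≤ M₊} η(i) and (W_{s_m} ⋯ W_{s_1} η)(M₊) = min_{−M₋ ≤ i ≤ M₊} η(i). -/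
/-- `W_{s_m} ⋯ W_{s_1} η` where `s_1` is applied first. -/
noncomputable def tasepWword (ss : List ℤ) (η : Equiv.Perm ℤ) : Equiv.Perm ℤ :=
  ss.foldl (fun a z => tasepW z a) η

/-!
Run the permutations `π_k = s_1 ⋯ s_k` alongside the configurations `η_k = W_{s_k} ⋯ W_{s_1} η`.
Since the word is reduced and `π_m = w₀` has `(M₊ + M₋ + 1).choose 2` inversions, every letter
`s_k = (z z+1)` is an ascent of `π_{k-1}` and adds exactly one inversion. This keeps the invariant
"every inversion of `π_k` is an inversion of `η_k`": the new inversion `(z, z+1)` is exactly the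
pair that `W_{s_k}` puts in decreasing order, and every other pair is either moved along with
`π` (when `W` swaps) or was already decreasing (when it does not). At the end every pair
`i < j` of the interval is an inversion of `w₀`, hence of `η_m`. The inverted pairs of values
of `π_k` only accumulate along the word and end up inside the interval; this forces every letter
into the interval, so positions outside it are never touched.
-/

open Equiv

namespace Tasep

def inversions (σ : Perm ℤ) : Set (ℤ × ℤ) := {p | p.1 < p.2 ∧ σ p.2 < σ p.1}

lemma inversions_one : inversions 1 = ∅ := by
  ext p
  simp only [inversions, Perm.one_apply, Set.mem_ofPred_eq, Set.mem_empty_iff_false, iff_false]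
  omega

lemma inversions_trans_swap_of_lt {σ : Perm ℤ} {z : ℤ} (h : σ⁻¹ z < σ⁻¹ (z + 1)) :
    inversions (σ.trans (swap z (z + 1))) = insert (σ⁻¹ z, σ⁻¹ (z + 1)) (inversions σ) := by
  obtain ⟨a, rfl⟩ := σ.surjective z
  obtain ⟨b, hb⟩ := σ.surjective (σ a + 1)
  rw [← hb] at h ⊢
  simp only [Perm.coe_inv, symm_apply_apply] at h ⊢
  ext ⟨i, j⟩
  have hi : σ i = σ a ↔ i = a := σ.injective.eq_iff
  have hj : σ j = σ a ↔ j = a := σ.injective.eq_iff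
  have hi' : σ i = σ b ↔ i = b := σ.injective.eq_iff
  have hj' : σ j = σ b ↔ j = b := σ.injective.eq_iff
  simp only [inversions, Set.mem_insert_iff, Set.mem_ofPred_eq, trans_apply, swap_apply_def,
    Prod.mk.injEq]
  split_ifs <;> omega

lemma inversions_trans_swap_subset_of_gt {σ : Perm ℤ} {z : ℤ} (h : σ⁻¹ (z + 1) < σ⁻¹ z) :
    inversions (σ.trans (swap z (z + 1))) ⊆ inversions σ := by
  set τ := σ.trans (swap z (z + 1))
  have hτ : τ.trans (swap z (z + 1)) = σ := by ext; simp [τ]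
  have hτ' : τ⁻¹ z < τ⁻¹ (z + 1) := by simpa [τ, Perm.inv_def] using h
  conv_rhs => rw [← hτ, inversions_trans_swap_of_lt hτ']
  exact Set.subset_insert _ _

lemma inversions_trans_swap_finite {σ : Perm ℤ} (z : ℤ) (h : (inversions σ).Finite) :
    (inversions (σ.trans (swap z (z + 1)))).Finite := by
  rcases lt_or_gt_of_ne (σ⁻¹.injective.ne (show z ≠ z + 1 by omega)) with hlt | hgt
  · rw [inversions_trans_swap_of_lt hlt]
    exact h.insert _
  · exact h.subset (inversions_trans_swap_subset_of_gt hgt)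

/-- `applyAdjSwaps [z₁, …, zₘ] σ = s_{zₘ} ∘ ⋯ ∘ s_{z₁} ∘ σ`; its inverse `σ⁻¹ s_{z₁} ⋯ s_{zₘ}` is
the permutation that the swap operators follow. -/
def applyAdjSwaps (L : List ℤ) (σ : Perm ℤ) : Perm ℤ :=
  L.foldl (fun σ z => σ.trans (swap z (z + 1))) σ

@[simp]
lemma applyAdjSwaps_nil (σ : Perm ℤ) : applyAdjSwaps [] σ = σ := rfl

@[simp]
lemma applyAdjSwaps_cons (z : ℤ) (L : List ℤ) (σ : Perm ℤ) :
    applyAdjSwaps (z :: L) σ = applyAdjSwaps L (σ.trans (swap z (z + 1))) := rfl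

def IsAscentWord : Perm ℤ → List ℤ → Prop
  | _, [] => True
  | σ, z :: L => σ⁻¹ z < σ⁻¹ (z + 1) ∧ IsAscentWord (σ.trans (swap z (z + 1))) L

lemma ncard_inversions_applyAdjSwaps_le (L : List ℤ) {σ : Perm ℤ} (h : (inversions σ).Finite) :
    (inversions (applyAdjSwaps L σ)).ncard ≤ (inversions σ).ncard + L.length := by
  induction L generalizing σ with
  | nil => simp
  | cons z L ih =>
    have hstep : (inversions (σ.trans (swap z (z + 1)))).ncard ≤ (inversions σ).ncard + 1 := by
      rcases lt_or_gt_of_ne (σ⁻¹.injective.ne (show z ≠ z + 1 by omega)) with hlt | hgt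
      · rw [inversions_trans_swap_of_lt hlt]
        exact Set.ncard_insert_le _ _
      · exact (Set.ncard_le_ncard (inversions_trans_swap_subset_of_gt hgt) h).trans (by omega)
    have := ih (inversions_trans_swap_finite z h)
    simp only [applyAdjSwaps_cons, List.length_cons] at this ⊢
    omega

lemma isAscentWord_of_ncard_eq (L : List ℤ) {σ : Perm ℤ} (h : (inversions σ).Finite)
    (hL : (inversions (applyAdjSwaps L σ)).ncard = (inversions σ).ncard + L.length) :
    IsAscentWord σ L := by
  induction L generalizing σ with
  | nil => trivial
  | cons z L ih =>
    have hle := ncard_inversions_applyAdjSwaps_le L (inversions_trans_swap_finite z h)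
    simp only [applyAdjSwaps_cons, List.length_cons] at hL hle
    rcases lt_or_gt_of_ne (σ⁻¹.injective.ne (show z ≠ z + 1 by omega)) with hlt | hgt
    · have hstep := Set.ncard_insert_of_notMem (a := (σ⁻¹ z, σ⁻¹ (z + 1)))
        (fun hmem => by simpa using hmem.2) h
      rw [← inversions_trans_swap_of_lt hlt] at hstep
      exact ⟨hlt, ih (inversions_trans_swap_finite z h) (by omega)⟩
    · have := Set.ncard_le_ncard (inversions_trans_swap_subset_of_gt hgt) h
      omega

lemma IsAscentWord.inversions_subset {L : List ℤ} {σ : Perm ℤ} (h : IsAscentWord σ L) :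
    inversions σ ⊆ inversions (applyAdjSwaps L σ) := by
  induction L generalizing σ with
  | nil => exact subset_rfl
  | cons z L ih =>
    refine subset_trans ?_ (ih h.2)
    rw [inversions_trans_swap_of_lt h.1]
    exact Set.subset_insert _ _

lemma tasepWword_cons (z : ℤ) (L : List ℤ) (η : Perm ℤ) :
    tasepWword (z :: L) η = tasepWword L (tasepW z η) := rfl

lemma tasepW_apply_of_ne {z j : ℤ} (η : Perm ℤ) (hz : j ≠ z) (hz' : j ≠ z + 1) :
    tasepW z η j = η j := by
  unfold tasepW
  split_ifs
  · rw [trans_apply, swap_apply_of_ne_of_ne hz hz']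
  · rfl

lemma image_tasepW_Icc {lo hi z : ℤ} (η : Perm ℤ) (hz : lo ≤ z) (hz' : z + 1 ≤ hi) :
    tasepW z η '' Set.Icc lo hi = η '' Set.Icc lo hi := by
  unfold tasepW
  split_ifs
  · rw [coe_trans, Set.image_comp, (swap z (z + 1)).image_eq_preimage_symm]
    congr 1
    ext x
    simp only [symm_swap, Set.mem_preimage, Set.mem_Icc, swap_apply_def]
    split_ifs <;> omega
  · rfl

lemma inversions_swap_trans_subset_tasepW {π η : Perm ℤ} {z : ℤ} (hπ : π z < π (z + 1))
    (h : inversions π ⊆ inversions η) :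
    inversions ((swap z (z + 1)).trans π) ⊆ inversions (tasepW z η) := by
  have hη : η z ≠ η (z + 1) := η.injective.ne (by omega)
  have h' : ∀ i j, i < j → π j < π i → η j < η i := fun i j hij hπij =>
    (h (a := (i, j)) ⟨hij, hπij⟩).2
  rintro ⟨i, j⟩ ⟨hij, hπij⟩
  refine ⟨hij, show tasepW z η j < tasepW z η i from ?_⟩
  have := h' i j; have := h' i z; have := h' i (z + 1); have := h' z j; have := h' (z + 1) j
  simp only [trans_apply, swap_apply_def] at hij hπij
  unfold tasepW
  split_ifs with hasc
  · simp only [trans_apply, swap_apply_def]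
    split_ifs at hπij ⊢ <;> subst_vars <;> omega
  · split_ifs at hπij <;> subst_vars <;> omega

lemma IsAscentWord.forall_mem_Ico {lo hi : ℤ} {L : List ℤ} {σ : Perm ℤ} (h : IsAscentWord σ L)
    (hσ : ∀ j ∉ Set.Icc lo hi, σ j = j)
    (hL : inversions (applyAdjSwaps L σ) ⊆ Set.Icc lo hi ×ˢ Set.Icc lo hi) :
    ∀ z ∈ L, z ∈ Set.Ico lo hi := by
  induction L generalizing σ with
  | nil => simp
  | cons z L ih =>
    have hpair : (σ⁻¹ z, σ⁻¹ (z + 1)) ∈ Set.Icc lo hi ×ˢ Set.Icc lo hi := by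
      refine hL (h.2.inversions_subset ?_)
      rw [inversions_trans_swap_of_lt h.1]
      exact Set.mem_insert _ _
    have hfix : ∀ j ∉ Set.Icc lo hi, σ⁻¹ j = j := fun j hj => Perm.inv_eq_iff_eq.2 (hσ j hj).symm
    have hz : z ∈ Set.Ico lo hi := by
      have h₁ := hfix z
      have h₂ := hfix (z + 1)
      simp only [Set.mem_prod, Set.mem_Icc, Set.mem_Ico] at hpair h₁ h₂ ⊢
      omega
    refine List.forall_mem_cons.2 ⟨hz, ih h.2 (fun j hj => ?_) hL⟩
    rw [trans_apply, hσ j hj]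
    simp only [Set.mem_Icc, Set.mem_Ico] at hj hz
    exact swap_apply_of_ne_of_ne (by omega) (by omega)

lemma tasepWword_apply_of_notMem_Icc {lo hi j : ℤ} {L : List ℤ} (η : Perm ℤ)
    (hL : ∀ z ∈ L, z ∈ Set.Ico lo hi) (hj : j ∉ Set.Icc lo hi) : tasepWword L η j = η j := by
  induction L generalizing η with
  | nil => rfl
  | cons z L ih =>
    obtain ⟨hz, hL⟩ := List.forall_mem_cons.1 hL
    rw [Set.mem_Ico] at hz
    rw [Set.mem_Icc] at hj
    rw [tasepWword_cons, ih _ hL, tasepW_apply_of_ne _ (by omega) (by omega)]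

lemma image_tasepWword_Icc {lo hi : ℤ} {L : List ℤ} (η : Perm ℤ)
    (hL : ∀ z ∈ L, z ∈ Set.Ico lo hi) : tasepWword L η '' Set.Icc lo hi = η '' Set.Icc lo hi := by
  induction L generalizing η with
  | nil => rfl
  | cons z L ih =>
    obtain ⟨hz, hL⟩ := List.forall_mem_cons.1 hL
    rw [tasepWword_cons, ih _ hL, image_tasepW_Icc _ hz.1 (Int.add_one_le_iff.2 hz.2)]

lemma IsAscentWord.inversions_inv_subset_tasepWword {L : List ℤ} {σ η : Perm ℤ}
    (h : IsAscentWord σ L) (hση : inversions σ⁻¹ ⊆ inversions η) :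
    inversions (applyAdjSwaps L σ)⁻¹ ⊆ inversions (tasepWword L η) := by
  induction L generalizing σ η with
  | nil => exact hση
  | cons z L ih =>
    have hinv : (σ.trans (swap z (z + 1)))⁻¹ = (swap z (z + 1)).trans σ⁻¹ := by
      rw [Perm.inv_def, symm_trans, symm_swap, ← Perm.inv_def]
    rw [applyAdjSwaps_cons, tasepWword_cons]
    exact ih h.2 (hinv ▸ inversions_swap_trans_subset_tasepW h.1 hση)

def reverseIcc (lo hi : ℤ) : Perm ℤ :=
  Function.Involutive.toPerm (fun j => if lo ≤ j ∧ j ≤ hi then lo + hi - j else j)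
    (fun j => by dsimp only; split_ifs <;> omega)

lemma reverseIcc_apply (lo hi j : ℤ) :
    reverseIcc lo hi j = if lo ≤ j ∧ j ≤ hi then lo + hi - j else j := rfl

lemma reverseIcc_inv (lo hi : ℤ) : (reverseIcc lo hi)⁻¹ = reverseIcc lo hi :=
  Function.Involutive.toPerm_symm _

lemma inversions_reverseIcc (lo hi : ℤ) :
    inversions (reverseIcc lo hi) = ↑{p ∈ Finset.Icc lo hi ×ˢ Finset.Icc lo hi | p.1 < p.2} := by
  ext ⟨i, j⟩
  simp only [inversions, reverseIcc_apply, Set.mem_ofPred_eq, Finset.coe_filter,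
    Finset.mem_product, Finset.mem_Icc]
  split_ifs <;> omega

lemma inversions_reverseIcc_subset (lo hi : ℤ) :
    inversions (reverseIcc lo hi) ⊆ Set.Icc lo hi ×ˢ Set.Icc lo hi := by
  intro p hp
  simp only [inversions_reverseIcc, Finset.coe_filter, Finset.mem_product, Finset.mem_Icc,
    Set.mem_ofPred_eq] at hp
  exact hp.1

lemma ncard_inversions_reverseIcc (lo hi : ℤ) :
    (inversions (reverseIcc lo hi)).ncard = (hi + 1 - lo).toNat.choose 2 := by
  rw [inversions_reverseIcc, Set.ncard_coe_finset, Finset.card_product_filter_lt, Int.card_Icc]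

end Tasep

open Tasep

theorem tasepW_reduced_word_sorts_general (Mm Mp : ℕ)
    (η : Equiv.Perm ℤ) (ss : List ℤ)
    (hword : ∀ j : ℤ,
      (ss.foldl (fun (σ : Equiv.Perm ℤ) z => σ.trans (Equiv.swap z (z + 1))) 1) j
        = if -(Mm : ℤ) ≤ j ∧ j ≤ (Mp : ℤ) then (Mp : ℤ) - Mm - j else j)
    (hreduced : ss.length = (Mp + Mm) * (Mp + Mm + 1) / 2) :
    (∀ j : ℤ, (j < -(Mm : ℤ) ∨ (Mp : ℤ) < j) → tasepWword ss η j = η j) ∧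
    (∀ i j : ℤ, -(Mm : ℤ) ≤ i → i < j → j ≤ (Mp : ℤ) →
        tasepWword ss η j < tasepWword ss η i) ∧
    (tasepWword ss η '' (Set.Icc (-(Mm : ℤ)) (Mp : ℤ))
        = η '' (Set.Icc (-(Mm : ℤ)) (Mp : ℤ))) ∧
    (tasepWword ss η (-(Mm : ℤ)) = sSup (η '' (Set.Icc (-(Mm : ℤ)) (Mp : ℤ)))) ∧
    (tasepWword ss η (Mp : ℤ) = sInf (η '' (Set.Icc (-(Mm : ℤ)) (Mp : ℤ)))) := by
  have hw₀ : applyAdjSwaps ss 1 = reverseIcc (-Mm) Mp := by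
    ext j
    rw [applyAdjSwaps, hword, reverseIcc_apply]
    split_ifs <;> ring
  have hasc : IsAscentWord 1 ss := by
    refine isAscentWord_of_ncard_eq ss (by simp [inversions_one]) ?_
    rw [hw₀, ncard_inversions_reverseIcc, inversions_one, Set.ncard_empty, hreduced,
      show (Mp + 1 - -Mm : ℤ).toNat = Mp + Mm + 1 by omega, Nat.choose_two_right,
      Nat.add_sub_cancel, zero_add, mul_comm]
  have hL : ∀ z ∈ ss, z ∈ Set.Ico (-(Mm : ℤ)) Mp := by
    exact hasc.forall_mem_Ico (fun _ _ => rfl) (hw₀ ▸ inversions_reverseIcc_subset _ _)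
  have hsorted : inversions (reverseIcc (-Mm) Mp) ⊆ inversions (tasepWword ss η) := by
    simpa [hw₀, reverseIcc_inv, inversions_one] using hasc.inversions_inv_subset_tasepWword
  have hanti : StrictAntiOn (tasepWword ss η) (Set.Icc (-(Mm : ℤ)) Mp) := by
    intro i hi j hj hij
    refine (hsorted (a := (i, j)) ?_).2
    simp_all [inversions_reverseIcc]
  have himage := image_tasepWword_Icc η hL
  refine ⟨fun j hj => tasepWword_apply_of_notMem_Icc η hL (by rw [Set.mem_Icc]; omega),
    fun i j h₁ h₂ h₃ => hanti ⟨h₁, by omega⟩ ⟨by omega, h₃⟩ h₂, himage, ?_, ?_⟩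
  · rw [← himage, (hanti.antitoneOn.map_isLeast (isLeast_Icc (by omega))).csSup_eq]
  · rw [← himage, (hanti.antitoneOn.map_isGreatest (isGreatest_Icc (by omega))).csInf_eq]

/-- If `s_1, …, s_m` (adjacent transpositions, `s_i = (z_i, z_i+1)`) form a reduced word for
the order-reversing permutation of `{-M₋, …, M₊}`, then `W_{s_m} ⋯ W_{s_1} η` agrees with `η`
outside `{-M₋, …, M₊}`, and on `{-M₋, …, M₊}` its values are the values of `η` there sorted in
decreasing order; in particular the value at `-M₋` is the maximum and the value at `M₊` is the
minimum of `η` over the interval. -/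
theorem tasepW_reduced_word_sorts (Mm Mp : ℕ) (hMm : 0 < Mm) (hMp : 0 < Mp)
    (η : Equiv.Perm ℤ) (ss : List ℤ)
    (hword : ∀ j : ℤ,
      (ss.foldl (fun (σ : Equiv.Perm ℤ) z => σ.trans (Equiv.swap z (z + 1))) 1) j
        = if -(Mm : ℤ) ≤ j ∧ j ≤ (Mp : ℤ) then (Mp : ℤ) - Mm - j else j)
    (hreduced : ss.length = (Mp + Mm) * (Mp + Mm + 1) / 2) :
    (∀ j : ℤ, (j < -(Mm : ℤ) ∨ (Mp : ℤ) < j) → tasepWword ss η j = η j) ∧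
    (∀ i j : ℤ, -(Mm : ℤ) ≤ i → i < j → j ≤ (Mp : ℤ) →
        tasepWword ss η j < tasepWword ss η i) ∧
    (tasepWword ss η '' (Set.Icc (-(Mm : ℤ)) (Mp : ℤ))
        = η '' (Set.Icc (-(Mm : ℤ)) (Mp : ℤ))) ∧
    (tasepWword ss η (-(Mm : ℤ)) = sSup (η '' (Set.Icc (-(Mm : ℤ)) (Mp : ℤ)))) ∧
    (tasepWword ss η (Mp : ℤ) = sInf (η '' (Set.Icc (-(Mm : ℤ)) (Mp : ℤ)))) :=
  tasepW_reduced_word_sorts_general Mm Mp η ss hword hreduced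
end

section
/- Consider two sequences of real-valued random variables {X_n} and {X̃_n}, each pair defined on the same probability space. If X_n ≥ X̃_n almost surely for each n, and both X_n and X̃_n converge in distribution to the same limit law D, then X_n − X̃_n converges to 0 in probability. -/
/-!
Choose continuity points `s 0 < s 1 < ⋯ < s k` of the limiting CDF `F` with consecutive gaps
below `ε`, `F (s 0)` small and `F (s k)` close to `1`. If `X - X̃ ≥ ε`, then `X ≤ s 0`, or
`X̃ > s k`, or `X̃ ≤ s i < X` for some `i`. Since `X̃ ≤ X`, the last event has probability
`P(X̃ ≤ s i) - P(X ≤ s i) → F (s i) - F (s i) = 0`. Hence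
`limsup P(|X - X̃| ≥ ε) ≤ F (s 0) + 1 - F (s k)`, which can be made arbitrarily small.
-/

open MeasureTheory Filter Set ProbabilityTheory

lemma exists_grid_index_between {s : ℕ → ℝ} {ε x y : ℝ} (hgap : ∀ i, s (i + 1) < s i + ε)
    (hε : ε ≤ x - y) (h₀ : s 0 < x) {k : ℕ} (hk : y ≤ s k) :
    ∃ i ≤ k, y ≤ s i ∧ s i < x := by
  induction k with
  | zero => exact ⟨0, le_rfl, hk, h₀⟩
  | succ k ih =>
    by_cases hx : s (k + 1) < x
    · exact ⟨k + 1, le_rfl, hk, hx⟩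
    · obtain ⟨i, hik, hi⟩ := ih (by linarith [hgap k, not_lt.1 hx])
      exact ⟨i, hik.trans k.le_succ, hi⟩

lemma Monotone.exists_continuousAt_mem_Ioo {f : ℝ → ℝ} (hf : Monotone f) {a b : ℝ}
    (hab : a < b) : ∃ x ∈ Ioo a b, ContinuousAt f x := by
  have hdense : Dense {x | ContinuousAt f x} := by
    simpa [compl_ofPred] using hf.countable_not_continuousAt.dense_compl ℝ
  obtain ⟨x, hx, hxab⟩ := hdense.exists_mem_open isOpen_Ioo (nonempty_Ioo.2 hab)
  exact ⟨x, hxab, hx⟩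

lemma Monotone.exists_continuousAt_grid {f : ℝ → ℝ} (hf : Monotone f) {ε : ℝ} (hε : 0 < ε)
    (a b : ℝ) : ∃ (s : ℕ → ℝ) (k : ℕ), (∀ i, ContinuousAt f (s i)) ∧
      (∀ i, s (i + 1) < s i + ε) ∧ s 0 < a ∧ b < s k := by
  set t : ℕ → ℝ := fun i => a - ε + i * (ε / 2)
  choose s hs hcont using fun i =>
    hf.exists_continuousAt_mem_Ioo (show t i < t i + ε / 2 by linarith)
  obtain ⟨k, hk⟩ := exists_nat_gt ((b - a + ε) / (ε / 2))
  rw [div_lt_iff₀ (by positivity)] at hk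
  refine ⟨s, k, hcont, fun i => ?_, ?_, ?_⟩
  · have := (hs (i + 1)).2
    have := (hs i).1
    simp only [t] at *
    push_cast at *
    linarith
  · have := (hs 0).2
    simp only [t] at this
    linarith
  · have := (hs k).1
    simp only [t] at this
    linarith

section Sandwich

variable {Ω : Type*} [MeasurableSpace Ω] {μ : Measure Ω} {X Y : Ω → ℝ}

lemma setOf_le_abs_sub_ae_le_grid_cover (hYX : Y ≤ᵐ[μ] X) {s : ℕ → ℝ} {ε : ℝ}
    (hgap : ∀ i, s (i + 1) < s i + ε) (k : ℕ) :
    {ω | ε ≤ |X ω - Y ω|} ≤ᵐ[μ] ({ω | X ω ≤ s 0} ∪ {ω | Y ω ≤ s k}ᶜ ∪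
      ⋃ i ∈ Finset.Iic k, {ω | Y ω ≤ s i} \ {ω | X ω ≤ s i} : Set Ω) := by
  filter_upwards [hYX] with ω hω hεω
  replace hεω : ε ≤ X ω - Y ω := hεω.trans_eq (abs_of_nonneg (sub_nonneg.2 hω))
  by_cases h₀ : X ω ≤ s 0
  · exact Or.inl (Or.inl h₀)
  by_cases hk : Y ω ≤ s k
  · obtain ⟨i, hik, hi⟩ := exists_grid_index_between hgap hεω (not_le.1 h₀) hk
    exact Or.inr (mem_biUnion (Finset.mem_Iic.2 hik) ⟨hi.1, not_le.2 hi.2⟩)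
  · exact Or.inl (Or.inr hk)

lemma measureReal_setOf_le_sdiff_of_ae_le [IsFiniteMeasure μ] (hX : Measurable X)
    (hYX : Y ≤ᵐ[μ] X) (c : ℝ) : μ.real ({ω | Y ω ≤ c} \ {ω | X ω ≤ c}) =
      μ.real {ω | Y ω ≤ c} - μ.real {ω | X ω ≤ c} := by
  have hinter : ({ω | Y ω ≤ c} ∩ {ω | X ω ≤ c} : Set Ω) =ᵐ[μ] {ω | X ω ≤ c} := by
    filter_upwards [hYX] with ω hω
    exact propext ⟨And.right, fun hωc => ⟨hω.trans hωc, hωc⟩⟩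
  rw [← measureReal_inter_add_sdiff (s := {ω | Y ω ≤ c}) (measurableSet_le hX measurable_const),
    measureReal_congr hinter]
  ring

lemma measureReal_setOf_le_abs_sub_le_grid_sum [IsProbabilityMeasure μ] (hX : Measurable X)
    (hY : Measurable Y) (hYX : Y ≤ᵐ[μ] X) {s : ℕ → ℝ} {ε : ℝ}
    (hgap : ∀ i, s (i + 1) < s i + ε) (k : ℕ) :
    μ.real {ω | ε ≤ |X ω - Y ω|} ≤ μ.real {ω | X ω ≤ s 0} + (1 - μ.real {ω | Y ω ≤ s k}) +
      ∑ i ∈ Finset.Iic k, (μ.real {ω | Y ω ≤ s i} - μ.real {ω | X ω ≤ s i}) := by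
  calc μ.real {ω | ε ≤ |X ω - Y ω|}
      ≤ μ.real ({ω | X ω ≤ s 0} ∪ {ω | Y ω ≤ s k}ᶜ ∪
          ⋃ i ∈ Finset.Iic k, {ω | Y ω ≤ s i} \ {ω | X ω ≤ s i}) :=
        ENNReal.toReal_mono (measure_ne_top _ _)
          (measure_mono_ae (setOf_le_abs_sub_ae_le_grid_cover hYX hgap k))
    _ ≤ μ.real {ω | X ω ≤ s 0} + μ.real {ω | Y ω ≤ s k}ᶜ +
          ∑ i ∈ Finset.Iic k, μ.real ({ω | Y ω ≤ s i} \ {ω | X ω ≤ s i}) :=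
        (measureReal_union_le _ _).trans
          (add_le_add (measureReal_union_le _ _) (measureReal_biUnion_finset_le _ _))
    _ = _ := by
      rw [probReal_compl_eq_one_sub (measurableSet_le hY measurable_const)]
      simp only [measureReal_setOf_le_sdiff_of_ae_le hX hYX]

end Sandwich

/-- Sandwich lemma for distributional limits (first half of Lemma 4.1 of [BC09]):
if `X_n ≥ X̃_n` a.s. and both converge in distribution (i.e. their CDFs converge at every
continuity point of the limiting CDF) to the same law `D`, then `X_n − X̃_n → 0` in
probability. -/
theorem sandwich_distributional_limits
    {Ω : Type*} [MeasurableSpace Ω] (μ : Measure Ω) [IsProbabilityMeasure μ]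
    (X Xt : ℕ → Ω → ℝ) (hX : ∀ n, Measurable (X n)) (hXt : ∀ n, Measurable (Xt n))
    (D : Measure ℝ) [IsProbabilityMeasure D]
    (hge : ∀ n, ∀ᵐ ω ∂μ, Xt n ω ≤ X n ω)
    (hconvX : ∀ s : ℝ, ContinuousAt (fun x => (D (Iic x)).toReal) s →
      Tendsto (fun n => (μ {ω | X n ω ≤ s}).toReal) atTop (nhds ((D (Iic s)).toReal)))
    (hconvXt : ∀ s : ℝ, ContinuousAt (fun x => (D (Iic x)).toReal) s →
      Tendsto (fun n => (μ {ω | Xt n ω ≤ s}).toReal) atTop (nhds ((D (Iic s)).toReal))) :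
    ∀ ε > 0, Tendsto (fun n => (μ {ω | ε ≤ |X n ω - Xt n ω|}).toReal) atTop (nhds 0) := by
  intro ε hε
  set F : ℝ → ℝ := fun x => (D (Iic x)).toReal
  have hF : F = cdf D := funext fun x => (cdf_eq_real D x).symm
  refine tendsto_order.2 ⟨fun a ha => .of_forall fun n => ha.trans_le ENNReal.toReal_nonneg,
    fun δ hδ => ?_⟩
  obtain ⟨a, ha⟩ := (hF ▸ tendsto_cdf_atBot D |>.eventually (gt_mem_nhds (half_pos hδ))).exists
  obtain ⟨b, hb⟩ :=
    (hF ▸ tendsto_cdf_atTop D |>.eventually (lt_mem_nhds (sub_lt_self 1 (half_pos hδ)))).exists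
  have hFmono : Monotone F := hF ▸ (cdf D).mono
  obtain ⟨s, k, hcont, hgap, hs₀, hsk⟩ := hFmono.exists_continuousAt_grid hε a b
  have hbound : Tendsto (fun n => μ.real {ω | X n ω ≤ s 0} + (1 - μ.real {ω | Xt n ω ≤ s k}) +
      ∑ i ∈ Finset.Iic k, (μ.real {ω | Xt n ω ≤ s i} - μ.real {ω | X n ω ≤ s i})) atTop
      (nhds (F (s 0) + (1 - F (s k)) + ∑ i ∈ Finset.Iic k, (F (s i) - F (s i)))) :=
    ((hconvX _ (hcont 0)).add (tendsto_const_nhds.sub (hconvXt _ (hcont k)))).add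
      (tendsto_finsetSum _ fun i _ => (hconvXt _ (hcont i)).sub (hconvX _ (hcont i)))
  have hlim : F (s 0) + (1 - F (s k)) + ∑ i ∈ Finset.Iic k, (F (s i) - F (s i)) < δ := by
    simp only [sub_self, Finset.sum_const_zero, add_zero]
    linarith [hFmono hs₀.le, hFmono hsk.le]
  filter_upwards [hbound.eventually_lt_const hlim] with n hn
  exact (measureReal_setOf_le_abs_sub_le_grid_sum (hX n) (hXt n) (hge n) hgap k).trans_lt hn
end

section
/- For TASEP height functions under the basic coupling, for any 0 ≤ τ ≤ t and any x ∈ ℤ: h(x, t) ≤ min_{y ∈ ℤ} { h(y, τ) + h^step_{y,τ}(x, t) }, where h^step_{y,τ}(x, t) is the height at (x, t) of the TASEP started at time τ from the wedge initial condition h(·, τ) = |· − y|, coupled via the same Poisson clocks. -/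
/-- A TASEP height function: nearest-neighbor increments of absolute value 1. -/
def IsHeightFun (h : ℤ → ℤ) : Prop := ∀ x : ℤ, |h (x + 1) - h x| = 1

/-- The corner-flip update at site `x`: if `x` is a strict local minimum of `h`,
then `h x` increases by `2`; otherwise nothing happens. -/
def tasepFlip (x : ℤ) (h : ℤ → ℤ) : ℤ → ℤ :=
  if h x < h (x - 1) ∧ h x < h (x + 1) then Function.update h x (h x + 2) else h

/-- Apply a (time-ordered) sequence of Poisson clock events (the events between times `τ`
and `t`), given as the list of their sites, to a height function; the same list realizes
the basic coupling for several height functions. -/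
def applyEvents (L : List ℤ) (h : ℤ → ℤ) : ℤ → ℤ :=
  L.foldl (fun g z => tasepFlip z g) h

/-!
Two coupled corner-flip dynamics preserve the order `f ≤ g` as long as `g - f` is even
everywhere: if `f` flips at `x` while `g` does not, then `f x < g x`, and parity leaves room for
the flip `f x ↦ f x + 2`. Flips change heights by `0` or `2`, so parity is itself preserved.
A height function is `1`-Lipschitz with `h z - z` of constant parity, hence lies below the wedge
`h y + |· - y|` with even difference; and adding a constant commutes with the dynamics.
-/

namespace IsHeightFun

variable {h : ℤ → ℤ}

lemma apply_add_one_eq (hh : IsHeightFun h) (z : ℤ) :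
    h (z + 1) = h z + 1 ∨ h (z + 1) = h z - 1 := by
  have := hh z
  rw [abs_eq zero_le_one] at this
  omega

lemma abs_apply_sub_le (hh : IsHeightFun h) (y z : ℤ) : |h z - h y| ≤ |z - y| := by
  induction z using Int.inductionOn' (b := y) with
  | zero => simp
  | succ k hk ih =>
    rcases hh.apply_add_one_eq k with hk' | hk' <;>
    · rw [hk', abs_of_nonneg (by omega : (0 : ℤ) ≤ k + 1 - y)]
      rw [abs_of_nonneg (by omega : (0 : ℤ) ≤ k - y)] at ih
      grind [abs_le]
  | pred k hk ih =>
    have hk1 := hh.apply_add_one_eq (k - 1)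
    rw [sub_add_cancel] at hk1
    rcases hk1 with hk' | hk' <;>
    · rw [abs_of_nonpos (by omega : k - 1 - y ≤ 0)]
      rw [abs_of_nonpos (by omega : k - y ≤ 0)] at ih
      grind [abs_le]

lemma apply_add_one_sub_modEq (hh : IsHeightFun h) (z : ℤ) :
    h (z + 1) - (z + 1) ≡ h z - z [ZMOD 2] := by
  unfold Int.ModEq
  rcases hh.apply_add_one_eq z with hz | hz <;> omega

lemma apply_sub_modEq (hh : IsHeightFun h) (y z : ℤ) : h z - z ≡ h y - y [ZMOD 2] := by
  induction z using Int.inductionOn' (b := y) with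
  | zero => rfl
  | succ k _ ih => exact (hh.apply_add_one_sub_modEq k).trans ih
  | pred k _ ih =>
    have hk := hh.apply_add_one_sub_modEq (k - 1)
    rw [sub_add_cancel] at hk
    exact hk.symm.trans ih

lemma le_wedge (hh : IsHeightFun h) (y : ℤ) : h ≤ fun z => h y + |z - y| := fun z => by
  linarith [le_abs_self (h z - h y), hh.abs_apply_sub_le y z]

lemma modEq_wedge (hh : IsHeightFun h) (y z : ℤ) : h z ≡ h y + |z - y| [ZMOD 2] := by
  have hzy := hh.apply_sub_modEq y z
  unfold Int.ModEq at *
  rcases abs_choice (z - y) with e | e <;> rw [e] <;> omega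

end IsHeightFun

section Dynamics

variable (x : ℤ)

lemma tasepFlip_apply_of_ne (h : ℤ → ℤ) {z : ℤ} (hz : z ≠ x) : tasepFlip x h z = h z := by
  unfold tasepFlip; split_ifs <;> simp [hz]

lemma tasepFlip_apply_self (h : ℤ → ℤ) :
    tasepFlip x h x = if h x < h (x - 1) ∧ h x < h (x + 1) then h x + 2 else h x := by
  unfold tasepFlip; split_ifs <;> simp

lemma tasepFlip_modEq (h : ℤ → ℤ) (z : ℤ) : tasepFlip x h z ≡ h z [ZMOD 2] := by
  rcases eq_or_ne z x with rfl | hz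
  · rw [tasepFlip_apply_self]
    split_ifs
    · exact Int.add_modulus_modEq_iff.mpr rfl
    · rfl
  · rw [tasepFlip_apply_of_ne x h hz]

lemma tasepFlip_mono {f g : ℤ → ℤ} (hle : f ≤ g) (hpar : ∀ z, f z ≡ g z [ZMOD 2]) :
    tasepFlip x f ≤ tasepFlip x g := by
  refine Pi.le_def.mpr fun z => ?_
  rcases eq_or_ne z x with rfl | hz
  · have hfx : f z ≤ g z := hle z
    have hpx := hpar z
    unfold Int.ModEq at hpx
    rw [tasepFlip_apply_self, tasepFlip_apply_self]
    split_ifs with hf hg hg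
    · omega
    · have hlt : f z < g z := by
        by_contra! hge
        exact hg ⟨by linarith [hf.1, hle (z - 1)], by linarith [hf.2, hle (z + 1)]⟩
      omega
    · omega
    · exact hfx
  · simpa [tasepFlip_apply_of_ne x _ hz] using hle z

lemma tasepFlip_const_add (c : ℤ) (f : ℤ → ℤ) :
    tasepFlip x (fun z => c + f z) = fun z => c + tasepFlip x f z := by
  funext z
  rcases eq_or_ne z x with rfl | hz
  · simp only [tasepFlip_apply_self, add_lt_add_iff_left]
    split_ifs <;> ring
  · simp only [tasepFlip_apply_of_ne x _ hz]

end Dynamics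

@[simp]
lemma applyEvents_cons (a : ℤ) (L : List ℤ) (h : ℤ → ℤ) :
    applyEvents (a :: L) h = applyEvents L (tasepFlip a h) := rfl

lemma applyEvents_modEq (L : List ℤ) (h : ℤ → ℤ) (z : ℤ) :
    applyEvents L h z ≡ h z [ZMOD 2] := by
  induction L generalizing h with
  | nil => rfl
  | cons a L ih => exact (ih _).trans (tasepFlip_modEq a h z)

lemma applyEvents_mono (L : List ℤ) {f g : ℤ → ℤ} (hle : f ≤ g)
    (hpar : ∀ z, f z ≡ g z [ZMOD 2]) : applyEvents L f ≤ applyEvents L g := by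
  induction L generalizing f g with
  | nil => exact hle
  | cons a L ih =>
    exact ih (tasepFlip_mono a hle hpar) fun z =>
      (tasepFlip_modEq a f z).trans ((hpar z).trans (tasepFlip_modEq a g z).symm)

lemma applyEvents_const_add (L : List ℤ) (c : ℤ) (f : ℤ → ℤ) :
    applyEvents L (fun z => c + f z) = fun z => c + applyEvents L f z := by
  induction L generalizing f with
  | nil => rfl
  | cons a L ih => rw [applyEvents_cons, tasepFlip_const_add, ih, applyEvents_cons]

/-- First half of the concatenation property: for any height function `h` at time `τ`,
any `y`, and any realization `L` of the Poisson events in `[τ, t]`,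
`h(x,t) ≤ h(y,τ) + h^step_{y,τ}(x,t)`, where `h^step_{y,τ}` is the evolution from the
wedge `|· − y|` under the same events. -/
theorem tasep_concatenation_upper_bound (h : ℤ → ℤ) (hh : IsHeightFun h)
    (L : List ℤ) (x y : ℤ) :
    applyEvents L h x ≤ h y + applyEvents L (fun z => |z - y|) x := by
  have hmono := applyEvents_mono L (hh.le_wedge y) (hh.modEq_wedge y)
  rw [applyEvents_const_add L (h y) (fun z => |z - y|)] at hmono
  exact hmono x
end

section
/- Comparison lemma: let h₁, h₂ be two TASEP height functions evolved under the basic coupling, with backwards geodesics π_{k,z} ending at (z, t) for k ∈ {1,2} and z ∈ {x, y}, where x < y. On the event that π_{1,x} and π_{2,y} intersect at some space-time point (x_τ, τ), one has h₂(y, t) − h₂(x, t) ≥ h₁(y, t) − h₁(x, t). Symmetrically, if π_{1,y} and π_{2,x} intersect, then h₂(y, t) − h₂(x, t) ≤ h₁(y, t) − h₁(x, t). -/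
/-- `g` is a backwards geodesic for the height function `h` ending at `(z, t)`, where the
Poisson events of `[0, t]` are listed by `L` and intermediate times correspond to splits
`L = L.take k ++ L.drop k`: for every intermediate time the concatenation identity holds
with minimizer `g k`, while for every `y` the concatenation inequality holds. -/
def IsBackGeodesic (L : List ℤ) (h : ℤ → ℤ) (z : ℤ) (g : ℕ → ℤ) : Prop :=
  g L.length = z ∧
    ∀ k ≤ L.length,
      (applyEvents L h z
        = applyEvents (L.take k) h (g k)
          + applyEvents (L.drop k) (fun w => |w - g k|) z) ∧
      (∀ y : ℤ, applyEvents L h z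
        ≤ applyEvents (L.take k) h y + applyEvents (L.drop k) (fun w => |w - y|) z)

/-!
Cut both geodesic variational formulas at the time `k` of the crossing, at the common point
`w`: the geodesic through `w` turns one concatenation inequality into an identity, so each
of the two increments `h(y,t) − h(x,t)` is compared with the increment, between `x` and `y`,
of the height function restarted at time `k` from the wedge at `w`.
-/

section BackGeodesic

variable {L : List ℤ} {h : ℤ → ℤ} {z : ℤ} {g : ℕ → ℤ} {k : ℕ}

theorem IsBackGeodesic.eq_concat (hg : IsBackGeodesic L h z g) (hk : k ≤ L.length) :
    applyEvents L h z
      = applyEvents (L.take k) h (g k) + applyEvents (L.drop k) (fun v => |v - g k|) z :=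
  (hg.2 k hk).1

theorem IsBackGeodesic.le_concat (hg : IsBackGeodesic L h z g) (hk : k ≤ L.length) (w : ℤ) :
    applyEvents L h z
      ≤ applyEvents (L.take k) h w + applyEvents (L.drop k) (fun v => |v - w|) z :=
  (hg.2 k hk).2 w

end BackGeodesic

theorem sub_le_sub_of_backGeodesics_cross {h h' : ℤ → ℤ} {L : List ℤ} {x y : ℤ}
    {gx gy gx' gy' : ℕ → ℤ}
    (hgx : IsBackGeodesic L h x gx) (hgy : IsBackGeodesic L h y gy)
    (hgx' : IsBackGeodesic L h' x gx') (hgy' : IsBackGeodesic L h' y gy')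
    {k : ℕ} (hk : k ≤ L.length) (hcross : gx k = gy' k) :
    applyEvents L h y - applyEvents L h x ≤ applyEvents L h' y - applyEvents L h' x := by
  set w := gy' k
  let step := applyEvents (L.drop k) (fun v => |v - w|)
  have hx : applyEvents L h x = applyEvents (L.take k) h w + step x := by
    rw [hgx.eq_concat hk, hcross]
  calc applyEvents L h y - applyEvents L h x ≤ step y - step x := by
        linarith [hgy.le_concat hk w]
    _ ≤ applyEvents L h' y - applyEvents L h' x := by
        linarith [hgy'.eq_concat hk, hgx'.le_concat hk w]

theorem tasep_comparison_lemma_general (h₁ h₂ : ℤ → ℤ)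
    (L : List ℤ) (x y : ℤ)
    (g1x g1y g2x g2y : ℕ → ℤ)
    (hg1x : IsBackGeodesic L h₁ x g1x) (hg1y : IsBackGeodesic L h₁ y g1y)
    (hg2x : IsBackGeodesic L h₂ x g2x) (hg2y : IsBackGeodesic L h₂ y g2y) :
    ((∃ k ≤ L.length, g1x k = g2y k) →
      applyEvents L h₁ y - applyEvents L h₁ x ≤ applyEvents L h₂ y - applyEvents L h₂ x) ∧
    ((∃ k ≤ L.length, g1y k = g2x k) →
      applyEvents L h₂ y - applyEvents L h₂ x ≤ applyEvents L h₁ y - applyEvents L h₁ x) :=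
  ⟨fun ⟨_, hk, hcross⟩ => sub_le_sub_of_backGeodesics_cross hg1x hg1y hg2x hg2y hk hcross,
    fun ⟨_, hk, hcross⟩ => sub_le_sub_of_backGeodesics_cross hg2x hg2y hg1x hg1y hk hcross.symm⟩

/-- Comparison lemma: if the backwards geodesic of `h₁` to `x` intersects the backwards
geodesic of `h₂` to `y` (with `x < y`), then
`h₂(y,t) − h₂(x,t) ≥ h₁(y,t) − h₁(x,t)`; symmetrically, if the geodesic of `h₁` to `y`
intersects that of `h₂` to `x`, the opposite inequality holds. -/
theorem tasep_comparison_lemma (h₁ h₂ : ℤ → ℤ)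
    (hh₁ : IsHeightFun h₁) (hh₂ : IsHeightFun h₂)
    (L : List ℤ) (x y : ℤ) (hxy : x < y)
    (g1x g1y g2x g2y : ℕ → ℤ)
    (hg1x : IsBackGeodesic L h₁ x g1x) (hg1y : IsBackGeodesic L h₁ y g1y)
    (hg2x : IsBackGeodesic L h₂ x g2x) (hg2y : IsBackGeodesic L h₂ y g2y) :
    ((∃ k ≤ L.length, g1x k = g2y k) →
      applyEvents L h₁ y - applyEvents L h₁ x ≤ applyEvents L h₂ y - applyEvents L h₂ x) ∧
    ((∃ k ≤ L.length, g1y k = g2x k) →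
      applyEvents L h₂ y - applyEvents L h₂ x ≤ applyEvents L h₁ y - applyEvents L h₁ x) :=
  tasep_comparison_lemma_general h₁ h₂ L x y g1x g1y g2x g2y hg1x hg1y hg2x hg2y
end

section
/- Suppose real-valued random variables satisfy h⁽¹⁾_t = h⁽²⁾_t + ε_t h⁽³⁾_t − X_t with X_t ≥ 0 almost surely, where ε_t → 0 is deterministic, h⁽¹⁾_t, h⁽²⁾_t, h⁽³⁾_t each converge in distribution to the same continuous law D (with h⁽³⁾_t tight). Then X_t → 0 in probability and hence h⁽¹⁾_t − h⁽²⁾_t → 0 in probability. -/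
/-!
Write `Y_t = h⁽²⁾_t + ε_t h⁽³⁾_t`. Tightness of `h⁽³⁾` and `ε_t → 0` make `ε_t h⁽³⁾_t → 0` in
probability, so at every continuity point the CDF of `Y_t` has the same limit as that of `h⁽²⁾_t`.
Now `h⁽¹⁾_t ≤ Y_t` a.s. and both CDFs converge to the same `F`: on a grid `a, a + δ, …, a + nδ`,
the event `Y_t - h⁽¹⁾_t ≥ δ` forces `Y_t` into a tail of `F`, or some grid point `s` between
`h⁽¹⁾_t` and `Y_t`, which has probability `P(h⁽¹⁾_t ≤ s) - P(Y_t ≤ s) → 0`. Hence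
`X_t = Y_t - h⁽¹⁾_t → 0` in probability, and `h⁽¹⁾_t - h⁽²⁾_t = ε_t h⁽³⁾_t - X_t` as well.
-/

open MeasureTheory Filter Set

open ProbabilityTheory Topology

theorem le_or_lt_or_exists_grid_point_mem_Ico {z y δ : ℝ} (hδ : 0 < δ) (hzy : z + δ ≤ y) (a : ℝ)
    (n : ℕ) : y ≤ a ∨ a + n * δ < y ∨ ∃ k ≤ n, z ≤ a + k * δ ∧ a + k * δ < y := by
  rcases le_or_gt y a with hya | hay
  · exact .inl hya
  -- the grid point `a + kδ` lands in `[z, z + δ)`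
  set k := ⌈(z - a) / δ⌉₊
  have hk_ge : z ≤ a + k * δ := by
    have := (div_le_iff₀ hδ).1 (Nat.le_ceil ((z - a) / δ)); linarith
  have hk_lt : a + k * δ < y := by
    rcases Nat.eq_zero_or_pos k with hk | hk
    · simpa [hk] using hay
    have hpos := (Nat.ceil_pos.1 hk).le
    have := Nat.ceil_lt_add_one hpos
    rw [div_add_one hδ.ne', lt_div_iff₀ hδ] at this
    linarith
  rcases le_or_gt k n with hkn | hnk
  · exact .inr (.inr ⟨k, hkn, hk_ge, hk_lt⟩)
  · refine .inr (.inl (lt_of_le_of_lt ?_ hk_lt))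
    gcongr

namespace MeasureTheory

variable {Ω ι : Type*} [MeasurableSpace Ω] {μ : Measure Ω}

theorem tendstoInMeasure_zero_iff_measureReal_abs [IsFiniteMeasure μ] {l : Filter ι}
    {f : ι → Ω → ℝ} :
    TendstoInMeasure μ f l 0 ↔
      ∀ η > 0, Tendsto (fun i => μ.real {ω | η ≤ |f i ω|}) l (𝓝 0) := by
  simp [tendstoInMeasure_iff_measureReal_norm]

theorem TendstoInMeasure.sub {E : Type*} [SeminormedAddCommGroup E] {l : Filter ι}
    {f f' : ι → Ω → E} {g g' : Ω → E} (hf : TendstoInMeasure μ f l g)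
    (hf' : TendstoInMeasure μ f' l g') :
    TendstoInMeasure μ (fun i ω => f i ω - f' i ω) l (g - g') := by
  rw [tendstoInMeasure_iff_norm] at hf hf' ⊢
  intro η hη
  have hsum := (hf (η / 2) (half_pos hη)).add (hf' (η / 2) (half_pos hη))
  rw [add_zero] at hsum
  refine tendsto_of_tendsto_of_tendsto_of_le_of_le tendsto_const_nhds hsum (fun _ => zero_le)
    fun i => (measure_mono fun ω hω => ?_).trans (measure_union_le _ _)
  by_contra hω'
  simp only [mem_union, mem_ofPred_eq, not_or, not_le] at hω hω'
  have := norm_sub_le (f i ω - g ω) (f' i ω - g' ω)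
  rw [Pi.sub_apply, sub_sub_sub_comm] at hω
  linarith

theorem tendstoInMeasure_mul_of_tight [IsFiniteMeasure μ] {l : Filter ι} {c : ι → ℝ}
    {f : ι → Ω → ℝ} (hc : Tendsto c l (𝓝 0))
    (hf : ∀ δ > 0, ∃ K : ℝ, ∀ i, μ.real {ω | K ≤ |f i ω|} ≤ δ) :
    TendstoInMeasure μ (fun i ω => c i * f i ω) l 0 := by
  rw [tendstoInMeasure_zero_iff_measureReal_abs]
  intro η hη
  refine tendsto_order.2 ⟨fun a ha => .of_forall fun i => ha.trans_le measureReal_nonneg,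
    fun δ hδ => ?_⟩
  obtain ⟨K, hK⟩ := hf (δ / 2) (half_pos hδ)
  have hK₁ : 0 < max K 1 := lt_max_of_lt_right one_pos
  have hc_small : ∀ᶠ i in l, |c i| < η / max K 1 := by
    simpa using Metric.tendsto_nhds.1 hc _ (div_pos hη hK₁)
  filter_upwards [hc_small] with i hi
  refine lt_of_le_of_lt (measureReal_mono fun ω hω => ?_) ((hK i).trans_lt (half_lt_self hδ))
  by_contra hfK
  simp only [mem_ofPred_eq, not_le, abs_mul] at hω hfK ⊢
  have := (lt_div_iff₀ hK₁).1 hi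
  nlinarith [abs_nonneg (c i), le_max_left K 1]

theorem tendsto_measureReal_add_le_of_continuousAt [IsFiniteMeasure μ] {l : Filter ι}
    {f P : ι → Ω → ℝ} {F : ℝ → ℝ} {s : ℝ} (hF : ContinuousAt F s)
    (hf : ∀ x, Tendsto (fun i => μ.real {ω | f i ω ≤ x}) l (𝓝 (F x)))
    (hP : TendstoInMeasure μ P l 0) :
    Tendsto (fun i => μ.real {ω | f i ω + P i ω ≤ s}) l (𝓝 (F s)) := by
  rw [tendstoInMeasure_zero_iff_measureReal_abs] at hP
  have upper : ∀ η i, μ.real {ω | f i ω + P i ω ≤ s} ≤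
      μ.real {ω | f i ω ≤ s + η} + μ.real {ω | η ≤ |P i ω|} := fun η i =>
    (measureReal_mono fun ω hω => by
      by_contra h
      simp only [mem_union, mem_ofPred_eq, not_or, not_le, abs_lt] at hω h
      linarith).trans (measureReal_union_le _ _)
  have lower : ∀ η i, μ.real {ω | f i ω ≤ s - η} ≤
      μ.real {ω | f i ω + P i ω ≤ s} + μ.real {ω | η ≤ |P i ω|} := fun η i =>
    (measureReal_mono fun ω hω => by
      by_contra h
      simp only [mem_union, mem_ofPred_eq, not_or, not_le, abs_lt] at hω h
      linarith).trans (measureReal_union_le _ _)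
  refine tendsto_order.2 ⟨fun a ha => ?_, fun b hb => ?_⟩
  · obtain ⟨r, hr, hFa⟩ := Metric.eventually_nhds_iff.1 (hF.eventually (lt_mem_nhds ha))
    have hlim := (hf (s - r / 2)).sub (hP (r / 2) (half_pos hr))
    rw [sub_zero] at hlim
    have ha' : a < F (s - r / 2) := hFa (by rw [Real.dist_eq, abs_lt]; constructor <;> linarith)
    filter_upwards [hlim.eventually (lt_mem_nhds ha')] with i hi
    linarith [lower (r / 2) i]
  · obtain ⟨r, hr, hFb⟩ := Metric.eventually_nhds_iff.1 (hF.eventually (gt_mem_nhds hb))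
    have hlim := (hf (s + r / 2)).add (hP (r / 2) (half_pos hr))
    rw [add_zero] at hlim
    have hb' : F (s + r / 2) < b := hFb (by rw [Real.dist_eq, abs_lt]; constructor <;> linarith)
    filter_upwards [hlim.eventually (gt_mem_nhds hb')] with i hi
    linarith [upper (r / 2) i]

theorem tendsto_measureReal_setOf_le_sdiff [IsFiniteMeasure μ] {l : Filter ι}
    {Z Y : ι → Ω → ℝ} (hY : ∀ i, Measurable (Y i)) (hle : ∀ i, ∀ᵐ ω ∂μ, Z i ω ≤ Y i ω)
    {s c : ℝ} (hZc : Tendsto (fun i => μ.real {ω | Z i ω ≤ s}) l (𝓝 c))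
    (hYc : Tendsto (fun i => μ.real {ω | Y i ω ≤ s}) l (𝓝 c)) :
    Tendsto (fun i => μ.real ({ω | Z i ω ≤ s} \ {ω | Y i ω ≤ s})) l (𝓝 0) := by
  have hsdiff : ∀ i, μ.real ({ω | Z i ω ≤ s} \ {ω | Y i ω ≤ s}) =
      μ.real {ω | Z i ω ≤ s} - μ.real {ω | Y i ω ≤ s} := fun i => by
    have hsub : {ω | Y i ω ≤ s} ≤ᵐ[μ] {ω | Z i ω ≤ s} := by
      filter_upwards [hle i] with ω hω hY using hω.trans hY
    rw [measureReal_sdiff' (measurableSet_le (hY i) measurable_const),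
      measureReal_congr (union_ae_eq_left_iff_ae_subset.2 hsub)]
  simpa [hsdiff] using hZc.sub hYc

theorem measureReal_setOf_le_sub_le_sum_grid [IsFiniteMeasure μ] (Z Y : Ω → ℝ) {δ : ℝ}
    (hδ : 0 < δ) (a : ℝ) (n : ℕ) :
    μ.real {ω | δ ≤ Y ω - Z ω} ≤ μ.real {ω | Y ω ≤ a} + μ.real {ω | a + n * δ < Y ω} +
      ∑ k ∈ Finset.range (n + 1),
        μ.real ({ω | Z ω ≤ a + k * δ} \ {ω | Y ω ≤ a + k * δ}) := by
  have hcover : {ω | δ ≤ Y ω - Z ω} ⊆ {ω | Y ω ≤ a} ∪ {ω | a + n * δ < Y ω} ∪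
      ⋃ k ∈ Finset.range (n + 1), {ω | Z ω ≤ a + k * δ} \ {ω | Y ω ≤ a + k * δ} := by
    intro ω hω
    have hzy : Z ω + δ ≤ Y ω := by simp only [mem_ofPred_eq] at hω; linarith
    rcases le_or_lt_or_exists_grid_point_mem_Ico hδ hzy a n with h | h | ⟨k, hkn, hzk, hky⟩
    · exact .inl (.inl h)
    · exact .inl (.inr h)
    · exact .inr (mem_biUnion (Finset.mem_range_succ_iff.2 hkn) ⟨hzk, hky.not_ge⟩)
  calc μ.real {ω | δ ≤ Y ω - Z ω}
      ≤ μ.real ({ω | Y ω ≤ a} ∪ {ω | a + n * δ < Y ω}) + μ.real (⋃ k ∈ Finset.range (n + 1),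
          {ω | Z ω ≤ a + k * δ} \ {ω | Y ω ≤ a + k * δ}) :=
        (measureReal_mono hcover).trans (measureReal_union_le _ _)
    _ ≤ _ := add_le_add (measureReal_union_le _ _) (measureReal_biUnion_finset_le _ _)

theorem tendstoInMeasure_sub_of_ae_le_of_tendsto_cdf [IsProbabilityMeasure μ] {F : ℝ → ℝ}
    (hF_bot : Tendsto F atBot (𝓝 0)) (hF_top : Tendsto F atTop (𝓝 1)) {Z Y : ℕ → Ω → ℝ}
    (hY : ∀ t, Measurable (Y t)) (hle : ∀ t, ∀ᵐ ω ∂μ, Z t ω ≤ Y t ω)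
    (hZF : ∀ x, Tendsto (fun t => μ.real {ω | Z t ω ≤ x}) atTop (𝓝 (F x)))
    (hYF : ∀ x, Tendsto (fun t => μ.real {ω | Y t ω ≤ x}) atTop (𝓝 (F x))) :
    TendstoInMeasure μ (fun t ω => Y t ω - Z t ω) atTop 0 := by
  rw [tendstoInMeasure_zero_iff_measureReal_abs]
  intro δ hδ
  refine tendsto_order.2 ⟨fun b hb => .of_forall fun t => hb.trans_le measureReal_nonneg,
    fun η hη => ?_⟩
  obtain ⟨a, ha⟩ := (hF_bot.eventually (gt_mem_nhds (half_pos hη))).exists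
  have hgrid : Tendsto (fun n : ℕ => a + n * δ) atTop atTop :=
    tendsto_atTop_add_const_left _ a (tendsto_natCast_atTop_atTop.atTop_mul_const hδ)
  obtain ⟨n, hn⟩ :=
    ((hF_top.comp hgrid).eventually (lt_mem_nhds (sub_lt_self 1 (half_pos hη)))).exists
  have htail :
      Tendsto (fun t => μ.real {ω | a + n * δ < Y t ω}) atTop (𝓝 (1 - F (a + n * δ))) := by
    refine ((hYF _).const_sub 1).congr fun t => ?_
    rw [← probReal_compl_eq_one_sub (measurableSet_le (hY t) measurable_const)]
    simp only [compl_ofPred, not_le]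
  have hgaps := tendsto_finsetSum (Finset.range (n + 1)) fun k _ =>
    tendsto_measureReal_setOf_le_sdiff (s := a + k * δ) hY hle (hZF _) (hYF _)
  have hbound := ((hYF a).add htail).add hgaps
  rw [Finset.sum_const_zero, add_zero] at hbound
  have hlt : F a + (1 - F (a + n * δ)) < η := by
    simp only [Function.comp_apply] at hn; linarith
  filter_upwards [hbound.eventually (gt_mem_nhds hlt)] with t ht
  have hae : {ω | δ ≤ |Y t ω - Z t ω|} =ᵐ[μ] {ω | δ ≤ Y t ω - Z t ω} := by
    filter_upwards [hle t] with ω hω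
    change (δ ≤ |Y t ω - Z t ω|) = (δ ≤ Y t ω - Z t ω)
    rw [abs_of_nonneg (sub_nonneg.2 hω)]
  rw [measureReal_congr hae]
  exact (measureReal_setOf_le_sub_le_sum_grid (Z t) (Y t) hδ a n).trans_lt ht

end MeasureTheory

theorem slow_decorrelation_abstract_general
    {Ω : Type*} [MeasurableSpace Ω] (μ : Measure Ω) [IsProbabilityMeasure μ]
    (h1 h2 h3 X : ℕ → Ω → ℝ)
    (hmeas2 : ∀ t, Measurable (h2 t))
    (hmeas3 : ∀ t, Measurable (h3 t))
    (ε : ℕ → ℝ) (hε : Tendsto ε atTop (nhds 0))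
    (hdecomp : ∀ t, ∀ᵐ ω ∂μ, h1 t ω = h2 t ω + ε t * h3 t ω - X t ω)
    (hXnonneg : ∀ t, ∀ᵐ ω ∂μ, 0 ≤ X t ω)
    (D : Measure ℝ) [IsProbabilityMeasure D]
    (hDcont : ∀ s : ℝ, ContinuousAt (fun x => (D (Iic x)).toReal) s)
    (hconv1 : ∀ s : ℝ, Tendsto (fun t => (μ {ω | h1 t ω ≤ s}).toReal)
        atTop (nhds ((D (Iic s)).toReal)))
    (hconv2 : ∀ s : ℝ, Tendsto (fun t => (μ {ω | h2 t ω ≤ s}).toReal)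
        atTop (nhds ((D (Iic s)).toReal)))
    (htight : ∀ δ > 0, ∃ K : ℝ, ∀ t, (μ {ω | K ≤ |h3 t ω|}).toReal ≤ δ) :
    (∀ ε' > 0, Tendsto (fun t => (μ {ω | ε' ≤ |X t ω|}).toReal) atTop (nhds 0)) ∧
    (∀ ε' > 0, Tendsto (fun t => (μ {ω | ε' ≤ |h1 t ω - h2 t ω|}).toReal)
        atTop (nhds 0)) := by
  have hcdf : ∀ x, (D (Iic x)).toReal = cdf D x := fun x => (cdf_eq_real D x).symm
  simp only [hcdf] at hDcont hconv1 hconv2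
  have hnoise := tendstoInMeasure_mul_of_tight hε htight
  have hYF := fun s => tendsto_measureReal_add_le_of_continuousAt (hDcont s) hconv2 hnoise
  have hgap := tendstoInMeasure_sub_of_ae_le_of_tendsto_cdf
    (tendsto_cdf_atBot D) (tendsto_cdf_atTop D)
    (Y := fun t ω => h2 t ω + ε t * h3 t ω) (fun t => by fun_prop)
    (fun t => by filter_upwards [hdecomp t, hXnonneg t] with ω h hX; linarith) hconv1 hYF
  have hX : TendstoInMeasure μ X atTop 0 := hgap.congr_left fun t => by
    filter_upwards [hdecomp t] with ω h; linarith
  have h12 : TendstoInMeasure μ (fun t ω => h1 t ω - h2 t ω) atTop 0 := by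
    refine (sub_self (0 : Ω → ℝ) ▸ hnoise.sub hX).congr_left fun t => ?_
    filter_upwards [hdecomp t] with ω h; linarith
  exact ⟨tendstoInMeasure_zero_iff_measureReal_abs.1 hX,
    tendstoInMeasure_zero_iff_measureReal_abs.1 h12⟩

/-- Abstract slow-decorrelation argument: if `h⁽¹⁾_t = h⁽²⁾_t + ε_t h⁽³⁾_t − X_t` with
`X_t ≥ 0` a.s., `ε_t → 0` deterministically, all three of `h⁽¹⁾, h⁽²⁾, h⁽³⁾` converge in
distribution to the same law `D` with continuous CDF, and `h⁽³⁾` is tight, then `X_t → 0`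
in probability and hence `h⁽¹⁾_t − h⁽²⁾_t → 0` in probability. -/
theorem slow_decorrelation_abstract
    {Ω : Type*} [MeasurableSpace Ω] (μ : Measure Ω) [IsProbabilityMeasure μ]
    (h1 h2 h3 X : ℕ → Ω → ℝ)
    (hmeas1 : ∀ t, Measurable (h1 t)) (hmeas2 : ∀ t, Measurable (h2 t))
    (hmeas3 : ∀ t, Measurable (h3 t)) (hmeasX : ∀ t, Measurable (X t))
    (ε : ℕ → ℝ) (hε : Tendsto ε atTop (nhds 0))
    (hdecomp : ∀ t, ∀ᵐ ω ∂μ, h1 t ω = h2 t ω + ε t * h3 t ω - X t ω)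
    (hXnonneg : ∀ t, ∀ᵐ ω ∂μ, 0 ≤ X t ω)
    (D : Measure ℝ) [IsProbabilityMeasure D]
    (hDcont : ∀ s : ℝ, ContinuousAt (fun x => (D (Iic x)).toReal) s)
    (hconv1 : ∀ s : ℝ, Tendsto (fun t => (μ {ω | h1 t ω ≤ s}).toReal)
        atTop (nhds ((D (Iic s)).toReal)))
    (hconv2 : ∀ s : ℝ, Tendsto (fun t => (μ {ω | h2 t ω ≤ s}).toReal)
        atTop (nhds ((D (Iic s)).toReal)))
    (hconv3 : ∀ s : ℝ, Tendsto (fun t => (μ {ω | h3 t ω ≤ s}).toReal)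
        atTop (nhds ((D (Iic s)).toReal)))
    (htight : ∀ δ > 0, ∃ K : ℝ, ∀ t, (μ {ω | K ≤ |h3 t ω|}).toReal ≤ δ) :
    (∀ ε' > 0, Tendsto (fun t => (μ {ω | ε' ≤ |X t ω|}).toReal) atTop (nhds 0)) ∧
    (∀ ε' > 0, Tendsto (fun t => (μ {ω | ε' ≤ |h1 t ω - h2 t ω|}).toReal)
        atTop (nhds 0)) :=
  slow_decorrelation_abstract_general μ h1 h2 h3 X hmeas2 hmeas3 ε hε hdecomp hXnonneg D hDcont
    hconv1 hconv2 htight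
end
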